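/- For every graph F with at least one edge, the limit π(F) = lim_{n→∞} ex_n(F)/C(n,2) exists and equals 1 − 1/(χ(F) − 1), where χ(F) is the chromatic number of F. -/

import Mathlib

open Filter Topology

attribute [local instance] Classical.propDecidable

/-- `G` contains a copy of `F`. -/
def Contains {α β : Type*} (F : SimpleGraph α) (G : SimpleGraph β) : Prop :=
  ∃ f : α ↪ β, ∀ a b, F.Adj a b → G.Adj (f a) (f b)

/-- Number of edges of a graph. -/
noncomputable def ecard {V : Type*} (G : SimpleGraph V) : ℕ := G.edgeSet.ncard

/-- The extremal number `ex_n(F)`. -/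
noncomputable def exNum (n : ℕ) {α : Type*} (F : SimpleGraph α) : ℕ :=
  sSup {m | ∃ H : SimpleGraph (Fin n), ¬ Contains F H ∧ ecard H = m}

/-- The generalized extremal number `ex_G(F)`. -/
noncomputable def exRel {V α : Type*} (G : SimpleGraph V) (F : SimpleGraph α) : ℕ :=
  sSup {m | ∃ H ≤ G, ¬ Contains F H ∧ ecard H = m}

/-- maximum size of a `t`-colorable subgraph of `G` -/
noncomputable def colRel {V : Type*} (G : SimpleGraph V) (t : ℕ) : ℕ :=
  sSup {m | ∃ H ≤ G, H.Colorable t ∧ ecard H = m}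

/-- probability that `G(n,p)` satisfies `P` -/
noncomputable def gnpProb (n : ℕ) (p : ℝ) (P : SimpleGraph (Fin n) → Prop) : ℝ :=
  ∑ᶠ G : SimpleGraph (Fin n),
    if P G then p ^ ecard G * (1 - p) ^ (n.choose 2 - ecard G) else 0

/-- number of labeled copies of `F` in `G` -/
noncomputable def numCopies {α V : Type*} (F : SimpleGraph α) (G : SimpleGraph V) : ℕ :=
  Set.ncard {f : α ↪ V | ∀ a b, F.Adj a b → G.Adj (f a) (f b)}

/-- expected number of labeled copies of `F` in `G(n,p)` -/
noncomputable def gnpExpCopies (n : ℕ) (p : ℝ) {α : Type*} (F : SimpleGraph α) : ℝ :=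
  ∑ᶠ G : SimpleGraph (Fin n),
    p ^ ecard G * (1 - p) ^ (n.choose 2 - ecard G) * numCopies F G

noncomputable def d2 {V : Type*} {F : SimpleGraph V} (H : F.Subgraph) : ℝ :=
  if 2 < H.verts.ncard then ((H.edgeSet.ncard : ℝ) - 1) / ((H.verts.ncard : ℝ) - 2)
  else 1/2

/-- the 2-density `m₂(F)` -/
noncomputable def m2 {V : Type*} (F : SimpleGraph V) : ℝ :=
  sSup {x | ∃ H : F.Subgraph, H.edgeSet.Nonempty ∧ d2 H = x}

/-- the asymmetric 2-density `m₂(F₁,F₂)` -/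
noncomputable def m2Asym {V W : Type*} (F₁ : SimpleGraph V) (F₂ : SimpleGraph W) : ℝ :=
  sSup {x | ∃ H : F₂.Subgraph, H.edgeSet.Nonempty ∧
    x = (H.edgeSet.ncard : ℝ) / ((H.verts.ncard : ℝ) - 2 + 1 / m2 F₁)}

/-- size of the cut given by a colouring `c` -/
noncomputable def cutSize {V : Type*} (G : SimpleGraph V) {t : ℕ} (c : V → Fin t) : ℕ :=
  Set.ncard {e ∈ G.edgeSet | ¬ (e.map c).IsDiag}

/-- a colouring is balanced if all colour classes have sizes differing by at most one -/
def BalancedPartition {V : Type*} [Fintype V] {t : ℕ} (c : V → Fin t) : Prop :=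
  ∀ i j : Fin t, (Finset.univ.filter fun v => c v = i).card ≤
    (Finset.univ.filter fun v => c v = j).card + 1

/-!
Write `χ(F) = q + 1`. For the lower bound, the complete `q`-partite graph with parts of size `m`
is `q`-colourable, hence `F`-free, and has edge density `(q - 1) m / (q m - 1) ≥ 1 - 1/q`; since
`ex_n(F) / C(n, 2)` is antitone, every term of the sequence is at least `1 - 1/q`.

For the upper bound, `F` embeds in the complete `(q + 1)`-partite graph `K` with parts of size
`|F|`. By the minimum-degree form of the Erdős–Stone theorem, for large `n` every `K`-free graph
on `n + 1` vertices has a vertex of degree `< (1 - 1/q + ε)(n + 1)`; deleting it gives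
`ex_{n+1}(K) ≤ ex_n(K) + (1 - 1/q + ε)(n + 1)`, and summing these increments shows
`ex_n(K) ≤ (1 - 1/q + ε) C(n, 2) + O(n)`.
-/

open Finset

namespace SimpleGraph

variable {W W' : Type*}

theorem IsContained.turanDensity_le {H : SimpleGraph W} {H' : SimpleGraph W'} (h : H' ⊑ H) :
    turanDensity H' ≤ turanDensity H :=
  le_of_tendsto_of_tendsto' (tendsto_turanDensity H') (tendsto_turanDensity H) fun _ ↦
    div_le_div_of_nonneg_right (mod_cast h.extremalNumber_le) (Nat.cast_nonneg _)

theorem extremalNumber_succ_le_of_minDegree {H : SimpleGraph W} {c : ℝ} (hc : 0 ≤ c) {n : ℕ}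
    (h : ∀ {G : SimpleGraph (Fin (n + 1))} [DecidableRel G.Adj],
      G.minDegree ≥ c * (n + 1 : ℕ) → H ⊑ G) :
    (extremalNumber (n + 1) H : ℝ) ≤ extremalNumber n H + c * (n + 1) := by
  rw [← Fintype.card_fin (n + 1), extremalNumber_le_iff_of_nonneg H (by positivity)]
  intro G _ hfree
  obtain ⟨v, hv⟩ := G.exists_minimal_degree_vertex
  have hδ : (G.degree v : ℝ) < c * (n + 1) := by
    contrapose! hfree
    exact h (by rw [hv]; exact_mod_cast hfree)
  have hdel := card_edgeFinset_deleteIncidenceSet_le_extremalNumber hfree v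
  rw [card_edgeFinset_deleteIncidenceSet, Fintype.card_fin, Nat.add_sub_cancel,
    Nat.sub_le_iff_le_add] at hdel
  have : (#G.edgeFinset : ℝ) ≤ extremalNumber n H + G.degree v := mod_cast hdel
  linarith

theorem extremalNumber_le_of_succ_le {H : SimpleGraph W} {c : ℝ} (hc : 0 ≤ c) {N : ℕ}
    (hN : 1 ≤ N)
    (h : ∀ n ≥ N, (extremalNumber (n + 1) H : ℝ) ≤ extremalNumber n H + c * (n + 1)) :
    ∀ n ≥ N,
      (extremalNumber n H : ℝ) ≤ c * (n * (n - 1) / 2) + (extremalNumber N H + c) * n := by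
  intro n hn
  induction n, hn using Nat.le_induction with
  | base =>
    have hN' : (0 : ℝ) ≤ N - 1 := by rw [sub_nonneg]; exact mod_cast hN
    have hex : (0 : ℝ) ≤ extremalNumber N H := Nat.cast_nonneg _
    nlinarith [mul_nonneg hex hN', mul_nonneg hc (mul_nonneg (Nat.cast_nonneg N) hN')]
  | succ n hn ih =>
    have hstep := h n hn
    push_cast
    nlinarith

theorem turanDensity_le_of_eventually_minDegree {H : SimpleGraph W} {c : ℝ} (hc : 0 ≤ c)
    (h : ∀ᶠ n in atTop, ∀ {G : SimpleGraph (Fin n)} [DecidableRel G.Adj],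
      G.minDegree ≥ c * n → H ⊑ G) :
    turanDensity H ≤ c := by
  obtain ⟨N, hN⟩ := eventually_atTop.mp h
  set N₀ := max N 1
  set B : ℝ := extremalNumber N₀ H + c
  have hbound := extremalNumber_le_of_succ_le hc (le_max_right N 1)
    fun n hn ↦ extremalNumber_succ_le_of_minDegree hc (hN (n + 1) (by omega))
  have hlim : Tendsto (fun n : ℕ ↦ c + 2 * B / ((n : ℝ) - 1)) atTop (𝓝 c) := by
    simpa [sub_eq_add_neg] using tendsto_const_nhds.add (tendsto_const_nhds.div_atTop
      (tendsto_atTop_add_const_right _ (-1) (tendsto_natCast_atTop_atTop (R := ℝ))))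
  refine ge_of_tendsto hlim (eventually_atTop.mpr ⟨max N₀ 2, fun n hn ↦ ?_⟩)
  have hn2 : 2 ≤ n := le_of_max_le_right hn
  refine ((isGLB_turanDensity H).1 ⟨n, hn2, rfl⟩).trans ?_
  have := hbound n (le_of_max_le_left hn)
  have hn1 : (1 : ℝ) < n := by exact_mod_cast hn2
  rw [Nat.cast_choose_two, div_le_iff₀ (by nlinarith)]
  calc (extremalNumber n H : ℝ) ≤ c * (n * (n - 1) / 2) + B * n := this
    _ = (c + 2 * B / (n - 1)) * (n * (n - 1) / 2) := by
      field_simp [show (n : ℝ) - 1 ≠ 0 by linarith]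

theorem turanDensity_completeEquipartiteGraph_le (q t : ℕ) :
    turanDensity (completeEquipartiteGraph (q + 1) t) ≤ 1 - 1 / q :=
  le_of_forall_pos_le_add fun _ hε ↦
    turanDensity_le_of_eventually_minDegree
      (add_nonneg (Nat.one_sub_one_div_cast_nonneg q) hε.le)
      (eventually_completeEquipartiteGraph_isContained_of_minDegree hε q t)

theorem turanDensity_le_of_colorable [Fintype W] {H : SimpleGraph W} {q : ℕ}
    (h : H.Colorable (q + 1)) : turanDensity H ≤ 1 - 1 / q :=
  IsContained.turanDensity_le
    (isContained_completeEquipartiteGraph_of_colorable h.some _ fun _ ↦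
      Fintype.card_subtype_le _) |>.trans (turanDensity_completeEquipartiteGraph_le q _)

theorem le_turanDensity_of_not_colorable {H : SimpleGraph W} {q : ℕ} (hq : 0 < q)
    (h : ¬ H.Colorable q) : 1 - 1 / q ≤ turanDensity H := by
  refine (isGLB_turanDensity H).2 ?_
  rintro _ ⟨n, hn, rfl⟩
  have hn_le : n ≤ q * n := Nat.le_mul_of_pos_left n hq
  have hqn : 2 ≤ q * n := hn.trans hn_le
  refine le_trans ?_ (antitoneOn_extremalNumber_div_choose_two H hn hqn hn_le)
  have hfree : H.Free (completeEquipartiteGraph q n) := fun ⟨f⟩ ↦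
    h (completeEquipartiteGraph_colorable.of_hom f.toHom)
  have hex := card_edgeFinset_le_extremalNumber hfree
  rw [card_edgeFinset_completeEquipartiteGraph, Fintype.card_prod, Fintype.card_fin,
    Fintype.card_fin] at hex
  have hex' : (q.choose 2 : ℝ) * n ^ 2 ≤ extremalNumber (q * n) H := mod_cast hex
  have hq' : (1 : ℝ) ≤ q := mod_cast hq
  have hn' : (2 : ℝ) ≤ n := mod_cast hn
  rw [le_div_iff₀ (Nat.cast_pos.2 (Nat.choose_pos hqn)), Nat.cast_choose_two]
  rw [Nat.cast_choose_two] at hex'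
  push_cast
  have key : (1 - 1 / (q : ℝ)) * (q * n * (q * n - 1) / 2) =
      q * (q - 1) / 2 * n ^ 2 - (q - 1) * n / 2 := by
    field_simp
  nlinarith

theorem turanDensity_eq_of_chromaticNumber_eq [Fintype W] {H : SimpleGraph W} {q : ℕ}
    (hq : 0 < q) (h : H.chromaticNumber = q + 1) : turanDensity H = 1 - 1 / q := by
  refine le_antisymm (turanDensity_le_of_colorable ?_) (le_turanDensity_of_not_colorable hq ?_)
  · exact chromaticNumber_le_iff_colorable.mp (by rw [h]; push_cast; rfl)
  · intro hc
    have := h ▸ hc.chromaticNumber_le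
    norm_cast at this
    omega

end SimpleGraph

open SimpleGraph

theorem contains_iff_isContained {α β : Type*} {F : SimpleGraph α} {G : SimpleGraph β} :
    Contains F G ↔ F ⊑ G :=
  ⟨fun ⟨f, hf⟩ ↦ ⟨⟨⟨f, hf _ _⟩, f.injective⟩⟩,
    fun ⟨f⟩ ↦ ⟨f.toEmbedding, fun _ _ h ↦ f.toHom.map_adj h⟩⟩

theorem ecard_eq_card_edgeFinset {V : Type*} (G : SimpleGraph V) [Fintype G.edgeSet] :
    ecard G = #G.edgeFinset := by
  rw [ecard, ← coe_edgeFinset, Set.ncard_coe_finset]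

theorem exNum_eq_extremalNumber (n : ℕ) {α : Type*} (F : SimpleGraph α) :
    exNum n F = extremalNumber n F := by
  have hbdd : BddAbove {m | ∃ H : SimpleGraph (Fin n), ¬ Contains F H ∧ ecard H = m} :=
    ((Set.finite_range fun H : SimpleGraph (Fin n) ↦ ecard H).subset <| by
      rintro _ ⟨H, -, rfl⟩; exact Set.mem_range_self H).bddAbove
  refine le_antisymm (csSup_le' ?_) ?_
  · rintro _ ⟨H, hH, rfl⟩
    have := card_edgeFinset_le_extremalNumber (contains_iff_isContained.not.mp hH)
    rwa [Fintype.card_fin, ← ecard_eq_card_edgeFinset] at this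
  · have := (extremalNumber_le_iff (V := Fin n) F (exNum n F)).mpr fun G _ hfree ↦
      le_csSup hbdd ⟨G, contains_iff_isContained.not.mpr hfree, ecard_eq_card_edgeFinset G⟩
    rwa [Fintype.card_fin] at this

/-- Erdős–Stone theorem. -/
theorem stmt2 {α : Type*} [Fintype α] (F : SimpleGraph α) (hF : F.edgeSet.Nonempty) :
    Tendsto (fun n => (exNum n F : ℝ) / (n.choose 2 : ℝ)) atTop
      (nhds (1 - 1 / ((F.chromaticNumber.toNat : ℝ) - 1))) := by
  obtain ⟨r, hr⟩ := ENat.ne_top_iff_exists.mp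
    (chromaticNumber_ne_top_iff_exists.mpr ⟨_, F.colorable_of_fintype⟩)
  have h2 : 2 ≤ r := by
    have := two_le_chromaticNumber_iff_ne_bot.mpr (edgeSet_nonempty.mp hF)
    rw [← hr] at this
    exact_mod_cast this
  obtain ⟨q, rfl⟩ : ∃ q, r = q + 1 := ⟨r - 1, by omega⟩
  have hdensity : turanDensity F = 1 - 1 / q :=
    turanDensity_eq_of_chromaticNumber_eq (by omega) (by rw [← hr]; push_cast; rfl)
  rw [← hr, ENat.toNat_natCast, Nat.cast_add_one, add_sub_cancel_right, ← hdensity]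
  simpa only [exNum_eq_extremalNumber] using tendsto_turanDensity F
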